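/- arXiv:0810.2937 — 7 statements merged into one kernel-verified Lean document; each statement's English description precedes it below -/
import Mathlib

section
/- For every pure classical n↦1 strategy P = (E, D) there exists a classical n↦1 strategy with shared randomness (a probability distribution μ over pure strategies) whose worst-case success probability equals the average success probability of P; that is, min over all inputs (x,i) of the μ-probability that a sampled pure strategy (E', D') satisfies D' i (E' x) = x i is equal to (1/(n·2^n)) · Σ_{x ∈ {0,1}^n} Σ_{i < n} [D i (E x) = x i]. -/
/-!
Use the shared randomness to pick a uniformly random bit mask `z` and cyclic shift `k`, and run
`(E, D)` on the input `j ↦ x (j + k) ⊕ z j`, undoing mask and shift at decoding. For each fixed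
input `(x, i)` the map `(z, k) ↦ (x (· + k) ⊕ z, i - k)` is a bijection onto all input pairs of
the pure strategy, so the randomized strategy succeeds on `(x, i)` with probability exactly the
average success probability of `(E, D)`.
-/

open scoped ENNReal

/-- A pure classical `n ↦ 1` strategy: an encoding function together with `n`
decoding functions. -/
abbrev PureStrat (n : ℕ) := ((Fin n → Bool) → Bool) × (Fin n → Bool → Bool)

/-- The worst-case success probability of a classical strategy with shared randomness,
i.e. of a probability distribution `μ` over pure strategies: the minimum over all
inputs `(x, i)` of the `μ`-probability that a sampled pure strategy answers correctly. -/
noncomputable def srWorstCase (n : ℕ) (μ : PMF (PureStrat n)) : ℝ≥0∞ :=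
  ⨅ (x : Fin n → Bool) (i : Fin n), μ.toOuterMeasure {s | s.2 i (s.1 x) = x i}

/-- The average success probability of a pure classical strategy `(E, D)`. -/
noncomputable def avgSuccess (n : ℕ) (E : (Fin n → Bool) → Bool)
    (D : Fin n → Bool → Bool) : ℝ≥0∞ :=
  (1 / ((n : ℝ≥0∞) * 2 ^ n)) *
    ∑ x : Fin n → Bool, ∑ i : Fin n, (if D i (E x) = x i then 1 else 0)

theorem Bool.xor_eq_iff_eq_xor {a b c : Bool} : xor a b = c ↔ a = xor c b := by
  rw [← Bool.xor_left_inj (z := b), Bool.xor_assoc, Bool.xor_self, Bool.xor_false]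

theorem PMF.toOuterMeasure_preimage_equiv {α : Type*} (p : PMF α) (e : α ≃ α)
    (he : ∀ a, p (e a) = p a) (s : Set α) :
    p.toOuterMeasure (e ⁻¹' s) = p.toOuterMeasure s := by
  simp only [PMF.toOuterMeasure_apply, ← e.tsum_eq (s.indicator p)]
  congr 1 with a
  by_cases h : e a ∈ s <;> simp [h, he]

theorem PMF.toOuterMeasure_uniformOfFintype_preimage_equiv {α : Type*} [Fintype α]
    [Nonempty α] (e : α ≃ α) (s : Set α) :
    (uniformOfFintype α).toOuterMeasure (e ⁻¹' s) = (uniformOfFintype α).toOuterMeasure s :=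
  toOuterMeasure_preimage_equiv _ e (by simp) s

section Twist

variable {n : ℕ} [NeZero n]

theorem avgSuccess_eq_toOuterMeasure_uniformOfFintype (E : (Fin n → Bool) → Bool)
    (D : Fin n → Bool → Bool) :
    avgSuccess n E D = (PMF.uniformOfFintype ((Fin n → Bool) × Fin n)).toOuterMeasure
      {p | D p.2 (E p.1) = p.1 p.2} := by
  classical
  rw [PMF.toOuterMeasure_uniformOfFintype_apply, avgSuccess, Fintype.card_subtype,
    Finset.card_filter, ← Finset.univ_product_univ, Finset.sum_product]
  simp [div_eq_mul_inv, mul_comm]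

def twistInput (x : Fin n → Bool) (zk : (Fin n → Bool) × Fin n) : Fin n → Bool :=
  fun j => xor (x (j + zk.2)) (zk.1 j)

def twistedStrat (E : (Fin n → Bool) → Bool) (D : Fin n → Bool → Bool)
    (zk : (Fin n → Bool) × Fin n) : PureStrat n :=
  (fun x => E (twistInput x zk), fun i c => xor (D (i - zk.2) c) (zk.1 (i - zk.2)))

def twistEquiv (x : Fin n → Bool) (i : Fin n) :
    (Fin n → Bool) × Fin n ≃ (Fin n → Bool) × Fin n where
  toFun zk := (twistInput x zk, i - zk.2)
  invFun yj := (twistInput x (yj.1, i - yj.2), i - yj.2)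
  left_inv zk := by ext <;> simp [twistInput]
  right_inv yj := by ext <;> simp [twistInput]

theorem preimage_twistedStrat_correct (E : (Fin n → Bool) → Bool) (D : Fin n → Bool → Bool)
    (x : Fin n → Bool) (i : Fin n) :
    twistedStrat E D ⁻¹' {s | s.2 i (s.1 x) = x i} =
      twistEquiv x i ⁻¹' {p | D p.2 (E p.1) = p.1 p.2} := by
  ext ⟨z, k⟩
  simp [twistedStrat, twistEquiv, twistInput, Bool.xor_eq_iff_eq_xor]

end Twist

/-- For every pure classical strategy there is a strategy with shared randomness whose
worst-case success probability equals the average success probability of the pure one. -/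
theorem stmt0 (n : ℕ) (hn : 1 ≤ n) (E : (Fin n → Bool) → Bool)
    (D : Fin n → Bool → Bool) :
    ∃ μ : PMF (PureStrat n), srWorstCase n μ = avgSuccess n E D := by
  have : NeZero n := ⟨by omega⟩
  refine ⟨(PMF.uniformOfFintype _).map (twistedStrat E D), ?_⟩
  have success_eq (x : Fin n → Bool) (i : Fin n) :
      ((PMF.uniformOfFintype _).map (twistedStrat E D)).toOuterMeasure
        {s : PureStrat n | s.2 i (s.1 x) = x i} = avgSuccess n E D := by
    rw [PMF.toOuterMeasure_map_apply, preimage_twistedStrat_correct,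
      PMF.toOuterMeasure_uniformOfFintype_preimage_equiv,
      avgSuccess_eq_toOuterMeasure_uniformOfFintype]
  simp only [srWorstCase, success_eq, iInf_const]
end

section
/- The supremum, over all classical n↦1 strategies with shared randomness μ, of the worst-case success probability of μ equals the maximum, over all pure classical n↦1 strategies P, of the average success probability of P. -/
/-!
Averaging over the inputs gives `≤`: the worst-case success probability of `μ` is at most its
success probability on a uniformly random input, which is the `μ`-average of the average success
probabilities of pure strategies. For `≥`, a pure strategy `P` is symmetrized with shared
randomness: a uniformly random shift `k` of the positions and mask `z` of the bits turn the input
`(x, i)` into `(x (· + k) xor z, i - k)`, which is uniformly distributed whatever `(x, i)` was, so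
every input is answered correctly with probability exactly the average success of `P`.
-/

open scoped ENNReal

namespace PMF

variable {α β : Type*}

theorem iInf_le_tsum_mul (p : PMF α) (f : α → ℝ≥0∞) : ⨅ a, f a ≤ ∑' a, p a * f a :=
  calc ⨅ a, f a = ∑' a, p a * ⨅ a, f a := by rw [ENNReal.tsum_mul_right, p.tsum_coe, one_mul]
    _ ≤ ∑' a, p a * f a := ENNReal.tsum_le_tsum fun a => by gcongr; exact iInf_le f a

theorem tsum_mul_le_iSup (p : PMF α) (f : α → ℝ≥0∞) : ∑' a, p a * f a ≤ ⨆ a, f a :=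
  calc ∑' a, p a * f a ≤ ∑' a, p a * ⨆ a, f a :=
        ENNReal.tsum_le_tsum fun a => by gcongr; exact le_iSup f a
    _ = ⨆ a, f a := by rw [ENNReal.tsum_mul_right, p.tsum_coe, one_mul]

theorem tsum_mul_toOuterMeasure_comm (p : PMF α) (q : PMF β) (r : α → β → Prop) :
    ∑' b, q b * p.toOuterMeasure {a | r a b} = ∑' a, p a * q.toOuterMeasure {b | r a b} := by
  classical
  simp only [toOuterMeasure_apply, Set.indicator_apply, Set.mem_ofPred_eq, ← ENNReal.tsum_mul_left]
  rw [ENNReal.tsum_comm]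
  refine tsum_congr fun a => tsum_congr fun b => ?_
  split_ifs <;> simp [mul_comm]

theorem toOuterMeasure_uniformOfFintype_preimage [Fintype α] [Nonempty α] [Fintype β]
    [Nonempty β] (e : α ≃ β) (s : Set β) :
    (uniformOfFintype α).toOuterMeasure (e ⁻¹' s) = (uniformOfFintype β).toOuterMeasure s := by
  classical
  rw [toOuterMeasure_uniformOfFintype_apply, toOuterMeasure_uniformOfFintype_apply,
    Fintype.card_congr e]
  congr 2
  exact Fintype.card_congr (e.subtypeEquiv fun _ => Iff.rfl)

end PMF

open PMF

namespace PureStrat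

variable {n : ℕ}

abbrev Input (n : ℕ) := (Fin n → Bool) × Fin n

def Wins (s : PureStrat n) (q : Input n) : Prop := s.2 q.2 (s.1 q.1) = q.1 q.2

instance (s : PureStrat n) : DecidablePred (Wins s) := fun _ => inferInstanceAs (Decidable (_ = _))

theorem srWorstCase_eq_iInf (μ : PMF (PureStrat n)) :
    srWorstCase n μ = ⨅ q : Input n, μ.toOuterMeasure {s | Wins s q} :=
  (iInf_prod (f := fun q : Input n => μ.toOuterMeasure {s | Wins s q})).symm

theorem avgSuccess_eq_toOuterMeasure_uniform [NeZero n] (P : PureStrat n) :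
    avgSuccess n P.1 P.2 = (uniformOfFintype (Input n)).toOuterMeasure {q | Wins P q} := by
  rw [avgSuccess, toOuterMeasure_uniformOfFintype_apply, Fintype.card_subtype, ← Finset.sum_boole,
    Fintype.sum_prod_type, one_div, ENNReal.div_eq_inv_mul]
  congr 2
  simp [mul_comm]

theorem srWorstCase_le_iSup_avgSuccess [NeZero n] (μ : PMF (PureStrat n)) :
    srWorstCase n μ ≤ ⨆ P : PureStrat n, avgSuccess n P.1 P.2 := by
  simp_rw [srWorstCase_eq_iInf, avgSuccess_eq_toOuterMeasure_uniform]
  calc ⨅ q, μ.toOuterMeasure {s | Wins s q}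
      ≤ ∑' q, uniformOfFintype (Input n) q * μ.toOuterMeasure {s | Wins s q} :=
        iInf_le_tsum_mul _ _
    _ = ∑' s, μ s * (uniformOfFintype (Input n)).toOuterMeasure {q | Wins s q} :=
        tsum_mul_toOuterMeasure_comm _ _ _
    _ ≤ _ := tsum_mul_le_iSup _ _

def twist (P : PureStrat n) (kz : Fin n × (Fin n → Bool)) : PureStrat n :=
  (fun x => P.1 fun j => xor (x (j + kz.1)) (kz.2 j),
   fun i b => xor (P.2 (i - kz.1) b) (kz.2 (i - kz.1)))

def twistEquiv [NeZero n] (q : Input n) : Fin n × (Fin n → Bool) ≃ Input n :=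
  ((Equiv.subLeft q.2).prodShear fun k =>
    Function.Involutive.toPerm (fun z j => xor (q.1 (j + k)) (z j))
      fun _ => funext fun _ => Bool.bne_self_left ..).trans (Equiv.prodComm _ _)

theorem twistEquiv_apply [NeZero n] (q : Input n) (kz : Fin n × (Fin n → Bool)) :
    twistEquiv q kz = (fun j => xor (q.1 (j + kz.1)) (kz.2 j), q.2 - kz.1) :=
  rfl

theorem wins_twist_iff [NeZero n] (P : PureStrat n) (kz : Fin n × (Fin n → Bool)) (q : Input n) :
    Wins (twist P kz) q ↔ Wins P (twistEquiv q kz) := by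
  have xor_eq_iff : ∀ a b c : Bool, xor a c = b ↔ a = xor b c := by decide
  simp only [Wins, twist, twistEquiv_apply, sub_add_cancel]
  exact xor_eq_iff ..

noncomputable def symmetrize [NeZero n] (P : PureStrat n) : PMF (PureStrat n) :=
  (uniformOfFintype (Fin n × (Fin n → Bool))).map (twist P)

theorem toOuterMeasure_symmetrize_wins [NeZero n] (P : PureStrat n) (q : Input n) :
    (symmetrize P).toOuterMeasure {s | Wins s q} = avgSuccess n P.1 P.2 := by
  have preimage_eq : twist P ⁻¹' {s | Wins s q} = twistEquiv q ⁻¹' {q' | Wins P q'} :=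
    Set.ext fun kz => wins_twist_iff P kz q
  rw [symmetrize, toOuterMeasure_map_apply, preimage_eq, toOuterMeasure_uniformOfFintype_preimage,
    avgSuccess_eq_toOuterMeasure_uniform]

theorem srWorstCase_symmetrize [NeZero n] (P : PureStrat n) :
    srWorstCase n (symmetrize P) = avgSuccess n P.1 P.2 := by
  simp only [srWorstCase_eq_iInf, toOuterMeasure_symmetrize_wins, iInf_const]

end PureStrat

/-- The supremum over strategies with shared randomness of the worst-case success
probability equals the maximum over pure strategies of the average success probability. -/
theorem stmt1 (n : ℕ) (hn : 1 ≤ n) :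
    (⨆ μ : PMF (PureStrat n), srWorstCase n μ) =
      ⨆ P : PureStrat n, avgSuccess n P.1 P.2 := by
  have : NeZero n := ⟨by omega⟩
  refine le_antisymm (iSup_le PureStrat.srWorstCase_le_iSup_avgSuccess) (iSup_le fun P => ?_)
  rw [← PureStrat.srWorstCase_symmetrize P]
  exact le_iSup (srWorstCase n) _
end

section
/- The pure classical n↦1 strategy whose encoding function is the majority function maj(x) (equal to 1 if the Hamming weight of x is at least n/2, and 0 otherwise) and whose decoding functions are all the identity on {0,1} is optimal: for every encoding function E : {0,1}^n → {0,1} and every family of decoding functions D : Fin n → ({0,1} → {0,1}), Σ_{x ∈ {0,1}^n} Σ_{i < n} [D i (E x) = x i] ≤ Σ_{x ∈ {0,1}^n} Σ_{i < n} [maj(x) = x i]. -/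
/-!
For a fixed decoder `D`, the best encoder picks for each `x` the larger of the scores
`a x = score D false x` and `b x = score D true x`. Pairing `x` with its complement gives
`2 ∑ₓ max (a x) (b x) = ∑ₓ (n + |a x - b x|)`, and `a x - b x` is, after relabelling the bits
of `x`, the signed sum `∑_{i ∈ S} (-1)^{x i}` over the set `S` of coordinates on which `D i` is not
constant. The mean of `|∑_{i ∈ S} (-1)^{x i}|` over the cube increases with `S`, so identity
decoders (`S = univ`) are optimal, and for them majority is the best encoder.
-/

/-- The Hamming weight of a bit string `x : Fin n → Bool` (the number of ones). -/
def hammingWeight (n : ℕ) (x : Fin n → Bool) : ℕ :=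
  (Finset.univ.filter fun i => x i = true).card

/-- The majority function: `1` iff the Hamming weight of `x` is at least `n / 2`. -/
def maj (n : ℕ) (x : Fin n → Bool) : Bool :=
  decide (n ≤ 2 * hammingWeight n x)

namespace RandomAccessCode

open Finset

variable {ι : Type*}

@[simps]
def xorEquiv (m : ι → Bool) : (ι → Bool) ≃ (ι → Bool) where
  toFun x i := xor (x i) (m i)
  invFun x i := xor (x i) (m i)
  left_inv x := by funext i; simp
  right_inv x := by funext i; simp

def bitSign (b : Bool) : ℤ := if b then -1 else 1

def signSum (S : Finset ι) (x : ι → Bool) : ℤ := ∑ i ∈ S, bitSign (x i)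

section SignSum

variable [Fintype ι] [DecidableEq ι]

/-- Pairing `x` with `x` flipped at `j`: `|s + 1| + |s - 1| ≥ 2 |s|`. -/
lemma sum_abs_signSum_le_insert {S : Finset ι} {j : ι} (hj : j ∉ S) :
    ∑ x, |signSum S x| ≤ ∑ x, |signSum (insert j S) x| := by
  let flip := xorEquiv fun i => decide (i = j)
  have hflip : ∀ x, signSum S (flip x) = signSum S x := fun x =>
    sum_congr rfl fun i hi => by
      simp [flip, show i ≠ j from fun h => hj (h ▸ hi)]
  have hpair : ∀ x, 2 * |signSum S x| ≤
      |signSum (insert j S) x| + |signSum (insert j S) (flip x)| := by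
    intro x
    have hj_flip : bitSign (flip x j) = -bitSign (x j) := by
      cases h : x j <;> simp [flip, bitSign, h]
    simp only [signSum, sum_insert hj]
    rw [hj_flip, ← signSum, ← signSum, hflip]
    calc 2 * |signSum S x|
        = |(bitSign (x j) + signSum S x) + (-bitSign (x j) + signSum S x)| := by
          rw [← abs_two, ← abs_mul]; ring_nf
      _ ≤ _ := abs_add_le _ _
  have h := sum_le_sum fun x (_ : x ∈ univ) => hpair x
  rw [← mul_sum, sum_add_distrib, flip.sum_comp (fun y => |signSum (insert j S) y|)] at h
  linarith

lemma sum_abs_signSum_le_univ (S : Finset ι) :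
    ∑ x, |signSum S x| ≤ ∑ x : ι → Bool, |signSum univ x| :=
  have hmono : Monotone fun S : Finset ι => ∑ x : ι → Bool, |signSum S x| :=
    monotone_iff_forall_le_insert.2 fun _ _ hj => sum_abs_signSum_le_insert hj
  hmono (subset_univ S)

end SignSum

section Score

variable [Fintype ι]

def score (D : ι → Bool → Bool) (b : Bool) (x : ι → Bool) : ℕ :=
  ∑ i, if D i b = x i then 1 else 0

def bestScore (D : ι → Bool → Bool) (x : ι → Bool) : ℕ :=
  max (score D false x) (score D true x)

lemma score_le_bestScore (D : ι → Bool → Bool) (b : Bool) (x : ι → Bool) :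
    score D b x ≤ bestScore D x := by
  cases b
  exacts [le_max_left _ _, le_max_right _ _]

lemma score_xor_true_add_score (D : ι → Bool → Bool) (b : Bool) (x : ι → Bool) :
    score D b (xorEquiv (fun _ => true) x) + score D b x = Fintype.card ι := by
  rw [score, score, ← sum_add_distrib, Fintype.card_eq_sum_ones]
  refine sum_congr rfl fun i _ => ?_
  simp only [xorEquiv_apply]
  cases D i b <;> cases x i <;> rfl

lemma score_id_false_add_score_id_true (x : ι → Bool) :
    score (fun _ => id) false x + score (fun _ => id) true x = Fintype.card ι := by
  rw [score, score, ← sum_add_distrib, Fintype.card_eq_sum_ones]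
  refine sum_congr rfl fun i _ => ?_
  cases x i <;> rfl

lemma score_false_sub_score_true (D : ι → Bool → Bool) (x : ι → Bool) :
    (score D false x : ℤ) - score D true x =
      signSum {i | D i false ≠ D i true} (xorEquiv (fun i => D i false) x) := by
  simp only [score, signSum, sum_filter]
  push_cast
  rw [← sum_sub_distrib]
  refine sum_congr rfl fun i _ => ?_
  simp only [xorEquiv_apply]
  cases D i false <;> cases D i true <;> cases x i <;> rfl

lemma score_id_false_sub_score_id_true (x : ι → Bool) :
    (score (fun _ => id) false x : ℤ) - score (fun _ => id) true x = signSum univ x := by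
  simp only [score, signSum]
  push_cast
  rw [← sum_sub_distrib]
  refine sum_congr rfl fun i _ => ?_
  cases x i <;> rfl

variable [DecidableEq ι]

/-- Pairing `x` with its complement: `max a b + max (n - a) (n - b) = n + |a - b|`. -/
lemma two_mul_sum_bestScore (D : ι → Bool → Bool) :
    2 * ∑ x, (bestScore D x : ℤ) =
      ∑ x, (Fintype.card ι + |(score D false x : ℤ) - score D true x|) := by
  rw [two_mul]
  nth_rewrite 1 [← (xorEquiv fun _ => true).sum_comp]
  rw [← sum_add_distrib]
  refine sum_congr rfl fun x _ => ?_
  have h₀ : (score D false (xorEquiv (fun _ => true) x) : ℤ) = Fintype.card ι - score D false x :=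
    eq_sub_of_add_eq (by exact_mod_cast score_xor_true_add_score D false x)
  have h₁ : (score D true (xorEquiv (fun _ => true) x) : ℤ) = Fintype.card ι - score D true x :=
    eq_sub_of_add_eq (by exact_mod_cast score_xor_true_add_score D true x)
  rw [bestScore, bestScore, Nat.cast_max, Nat.cast_max, h₀, h₁, Int.sub_max_sub_left,
    ← max_sub_min_eq_abs']
  ring

lemma sum_abs_score_false_sub_score_true_le (D : ι → Bool → Bool) :
    ∑ x, |(score D false x : ℤ) - score D true x| ≤ ∑ x : ι → Bool, |signSum univ x| := by
  simp_rw [score_false_sub_score_true]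
  rw [(xorEquiv _).sum_comp fun y => |signSum _ y|]
  exact sum_abs_signSum_le_univ _

theorem sum_bestScore_le_sum_bestScore_id (D : ι → Bool → Bool) :
    ∑ x, bestScore D x ≤ ∑ x, bestScore (fun _ : ι => id) x := by
  have hD := two_mul_sum_bestScore D
  have hid := two_mul_sum_bestScore fun _ : ι => id
  simp_rw [score_id_false_sub_score_id_true] at hid
  rw [sum_add_distrib] at hD hid
  have := sum_abs_score_false_sub_score_true_le D
  zify
  linarith

end Score

lemma score_id_maj_eq_bestScore (n : ℕ) (x : Fin n → Bool) :
    score (fun _ => id) (maj n x) x = bestScore (fun _ => id) x := by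
  have htrue : score (fun _ => id) true x = hammingWeight n x := by
    rw [score, hammingWeight, card_filter]
    exact sum_congr rfl fun i _ => by cases x i <;> rfl
  have hsum := score_id_false_add_score_id_true x
  rw [Fintype.card_fin] at hsum
  unfold maj bestScore
  by_cases h : n ≤ 2 * hammingWeight n x
  · rw [decide_eq_true h, max_eq_right (by omega)]
  · rw [decide_eq_false h, max_eq_left (by omega)]

end RandomAccessCode

open Finset RandomAccessCode in
theorem stmt4_general (n : ℕ) (E : (Fin n → Bool) → Bool)
    (D : Fin n → Bool → Bool) :
    (∑ x : Fin n → Bool, ∑ i : Fin n, if D i (E x) = x i then 1 else 0) ≤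
      ∑ x : Fin n → Bool, ∑ i : Fin n, if maj n x = x i then 1 else 0 :=
  calc (∑ x : Fin n → Bool, ∑ i : Fin n, if D i (E x) = x i then 1 else 0)
      ≤ ∑ x, bestScore D x := sum_le_sum fun x _ => score_le_bestScore D (E x) x
    _ ≤ ∑ x, bestScore (fun _ => id) x := sum_bestScore_le_sum_bestScore_id D
    _ = ∑ x : Fin n → Bool, ∑ i : Fin n, if maj n x = x i then 1 else 0 :=
      sum_congr rfl fun x _ => (score_id_maj_eq_bestScore n x).symm

/-- The strategy with majority encoding and identity decoding answers at least as
many input pairs `(x, i)` correctly as any pure classical strategy `(E, D)`. -/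
theorem stmt4 (n : ℕ) (hn : 1 ≤ n) (E : (Fin n → Bool) → Bool)
    (D : Fin n → Bool → Bool) :
    (∑ x : Fin n → Bool, ∑ i : Fin n, if D i (E x) = x i then 1 else 0) ≤
      ∑ x : Fin n → Bool, ∑ i : Fin n, if maj n x = x i then 1 else 0 :=
  stmt4_general n E D
end

section
/- For every n ≥ 1, the average success probability of the pure classical n↦1 strategy with majority encoding and identity decoding equals 1/2 + C(n−1, ⌊(n−1)/2⌋)/2^n; equivalently, Σ_{x ∈ {0,1}^n} Σ_{i < n} [maj(x) = x i] = n·2^{n−1} + n·C(n−1, ⌊(n−1)/2⌋), where C denotes the binomial coefficient. -/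
open Finset

lemma sum_apply_hammingWeight {M : Type*} [AddCommMonoid M] (n : ℕ) (f : ℕ → M) :
    ∑ x : Fin n → Bool, f (hammingWeight n x) = ∑ k ∈ range (n + 1), n.choose k • f k := by
  calc ∑ x : Fin n → Bool, f (hammingWeight n x)
      = ∑ s ∈ (univ : Finset (Fin n)).powerset, f #s :=
        sum_nbij' (fun x => univ.filter (x · = true)) (fun s i => decide (i ∈ s))
          (by simp) (by simp) (fun x _ => by ext; simp) (fun s _ => by ext; simp)
          (fun x _ => rfl)
    _ = ∑ k ∈ range (n + 1), n.choose k • f k := by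
        simpa using sum_powerset_apply_card f (x := (univ : Finset (Fin n)))

lemma card_filter_eq_false_eq_sub_hammingWeight (n : ℕ) (x : Fin n → Bool) :
    #(univ.filter fun i => x i = false) = n - hammingWeight n x := by
  have hsplit := card_filter_add_card_filter_not (s := (univ : Finset (Fin n))) (x · = true)
  simp only [Bool.not_eq_true, card_univ, Fintype.card_fin] at hsplit
  rw [hammingWeight]
  omega

lemma sum_ite_maj_eq_max (n : ℕ) (x : Fin n → Bool) :
    (∑ i : Fin n, if maj n x = x i then 1 else 0)
      = max (hammingWeight n x) (n - hammingWeight n x) := by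
  simp only [← card_filter, eq_comm (a := maj n x)]
  cases h : maj n x
  · rw [card_filter_eq_false_eq_sub_hammingWeight]
    simp only [maj, decide_eq_false_iff_not, not_le] at h
    omega
  · rw [← hammingWeight]
    simp only [maj, decide_eq_true_eq] at h
    omega

lemma sum_range_choose_succ_mul_self (m : ℕ) (f : ℕ → ℕ) :
    ∑ k ∈ range (m + 2), (m + 1).choose k * (k * f k)
      = (m + 1) * ∑ j ∈ range (m + 1), m.choose j * f (j + 1) := by
  rw [sum_range_succ', mul_sum]
  simp only [zero_mul, mul_zero, add_zero]
  refine sum_congr rfl fun j _ => ?_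
  rw [← mul_assoc, ← mul_assoc, Nat.add_one_mul_choose_eq]

lemma sum_range_choose_succ_mul_sub (m : ℕ) (f : ℕ → ℕ) :
    ∑ k ∈ range (m + 2), (m + 1).choose k * ((m + 1 - k) * f k)
      = (m + 1) * ∑ j ∈ range (m + 1), m.choose j * f j := by
  rw [sum_range_succ, mul_sum]
  simp only [Nat.sub_self, zero_mul, mul_zero, add_zero]
  refine sum_congr rfl fun j _ => ?_
  rw [← mul_assoc, ← mul_assoc, ← Nat.choose_mul_succ_eq, mul_comm (m + 1)]

lemma sum_range_choose_mul_max (m : ℕ) :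
    ∑ k ∈ range (m + 2), (m + 1).choose k * max k (m + 1 - k)
      = (m + 1) * (2 ^ m + m.choose (m / 2)) := by
  have hmax : ∀ k, max k (m + 1 - k)
      = k * (if m + 1 ≤ 2 * k then 1 else 0) + (m + 1 - k) * (if 2 * k ≤ m then 1 else 0) := by
    intro k; split_ifs <;> omega
  have hcover : ∀ j, (if m + 1 ≤ 2 * j + 2 then 1 else 0) + (if 2 * j ≤ m then 1 else 0)
      = 1 + if j = m / 2 then 1 else 0 := by
    intro j; split_ifs <;> omega
  calc ∑ k ∈ range (m + 2), (m + 1).choose k * max k (m + 1 - k)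
      = (m + 1) * ∑ j ∈ range (m + 1),
          m.choose j * ((if m + 1 ≤ 2 * j + 2 then 1 else 0) + (if 2 * j ≤ m then 1 else 0)) := by
        simp only [hmax, mul_add, sum_add_distrib, sum_range_choose_succ_mul_self,
          sum_range_choose_succ_mul_sub]
    _ = (m + 1) * (2 ^ m + m.choose (m / 2)) := by
        simp only [hcover, mul_add, mul_one, mul_ite, mul_zero, sum_add_distrib,
          Nat.sum_range_choose, sum_ite_eq', mem_range]
        rw [if_pos (by omega)]

lemma sum_sum_ite_maj_eq (m : ℕ) :
    (∑ x : Fin (m + 1) → Bool, ∑ i : Fin (m + 1), if maj (m + 1) x = x i then 1 else 0)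
      = (m + 1) * (2 ^ m + m.choose (m / 2)) := by
  simp only [sum_ite_maj_eq_max]
  exact (sum_apply_hammingWeight (m + 1) fun w => max w (m + 1 - w)).trans
    (sum_range_choose_mul_max m)

/-- The average success probability of the majority-encoding, identity-decoding
strategy is `1/2 + C(n-1, ⌊(n-1)/2⌋) / 2^n`; equivalently, the number of correctly
answered input pairs is `n·2^(n-1) + n·C(n-1, ⌊(n-1)/2⌋)`. -/
theorem stmt5 (n : ℕ) (hn : 1 ≤ n) :
    ((1 : ℝ) / ((n : ℝ) * 2 ^ n)) *
        (∑ x : Fin n → Bool, ∑ i : Fin n, if maj n x = x i then (1 : ℝ) else 0)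
      = 1 / 2 + (Nat.choose (n - 1) ((n - 1) / 2) : ℝ) / 2 ^ n ∧
    (∑ x : Fin n → Bool, ∑ i : Fin n, if maj n x = x i then 1 else 0)
      = n * 2 ^ (n - 1) + n * Nat.choose (n - 1) ((n - 1) / 2) := by
  obtain ⟨m, rfl⟩ : ∃ m, n = m + 1 := ⟨n - 1, by omega⟩
  have hcount := sum_sum_ite_maj_eq m
  have hcount_real : (∑ x : Fin (m + 1) → Bool, ∑ i : Fin (m + 1),
      if maj (m + 1) x = x i then (1 : ℝ) else 0) = (m + 1) * (2 ^ m + m.choose (m / 2)) := by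
    exact_mod_cast hcount
  simp only [Nat.add_sub_cancel]
  refine ⟨?_, by rw [hcount, mul_add]⟩
  rw [hcount_real]
  field_simp
  push_cast
  ring
end

section
/- For every odd integer n = 2m+1 with m ≥ 1, the quantity p(n) − 1/2 = C(2m, m)/2^{2m+1} satisfies the strict inequalities exp(1/(12n−11) − 2/(6n−6)) / √(2π(n−1)) < p(n) − 1/2 < exp(1/(12n−12) − 2/(6n−5)) / √(2π(n−1)). -/
/-!
Write `s k = stirlingSeq k / √π`, so that `C(2m, m) / 2^(2m+1) = s(2m) / s(m)^2 / √(4πm)`.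
Robbins' bounds `exp (1/(12k+1)) < s k ≤ exp (1/(12k))` follow by telescoping bounds on the
steps `log s k - log s (k+1)`: Robbins' `1/(12k(k+1))` from above, and from below the first
term `1/(3(2k+1)^2)` of their series, which strictly exceeds `1/(12k+1) - 1/(12k+13)`.
-/

open Real Filter Topology Stirling

theorem sub_le_sub_of_tendsto_of_sdiff_le {f g : ℕ → ℝ} {a b : ℝ} {n : ℕ}
    (hf : Tendsto f atTop (𝓝 a)) (hg : Tendsto g atTop (𝓝 b))
    (hfg : ∀ k ≥ n, f k - f (k + 1) ≤ g k - g (k + 1)) : f n - a ≤ g n - b := by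
  have hmono : Monotone fun k ↦ f (k + n) - g (k + n) :=
    monotone_nat_of_le_succ fun k ↦ by
      have := hfg (k + n) (Nat.le_add_left n k)
      rw [Nat.add_right_comm]
      linarith
  have := hmono.ge_of_tendsto ((hf.sub hg).comp (tendsto_add_atTop_nat n)) 0
  simp only [zero_add] at this
  linarith

theorem tendsto_one_div_mul_add_atTop {a : ℝ} (ha : 0 < a) (c : ℝ) :
    Tendsto (fun k : ℕ ↦ 1 / (a * k + c)) atTop (𝓝 0) :=
  tendsto_const_nhds.div_atTop <|
    (tendsto_natCast_atTop_atTop.const_mul_atTop ha).atTop_add tendsto_const_nhds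

theorem tendsto_log_stirlingSeq : Tendsto (fun n ↦ log (stirlingSeq n)) atTop (𝓝 (log √π)) :=
  tendsto_stirlingSeq_sqrt_pi.log (by positivity)

theorem stirlingSeq_pos {n : ℕ} (hn : n ≠ 0) : 0 < stirlingSeq n := by
  obtain ⟨j, rfl⟩ := Nat.exists_eq_succ_of_ne_zero hn
  exact stirlingSeq'_pos j

theorem one_div_three_mul_sq_le_log_stirlingSeq_sdiff (n : ℕ) :
    1 / (3 * (2 * (n + 1 : ℝ) + 1) ^ 2) ≤
      log (stirlingSeq (n + 1)) - log (stirlingSeq (n + 2)) := by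
  refine le_of_eq_of_le ?_ (le_hasSum (log_stirlingSeq_sdiff_hasSum n) 0 fun k _ ↦ by positivity)
  push_cast
  field_simp
  ring

theorem one_div_sub_one_div_lt_one_div_three_mul_sq {x : ℝ} (hx : 1 ≤ x) :
    1 / (12 * x + 1) - 1 / (12 * (x + 1) + 1) < 1 / (3 * (2 * x + 1) ^ 2) := by
  rw [div_sub_div _ _ (by positivity) (by positivity),
    div_lt_div_iff₀ (by positivity) (by positivity)]
  nlinarith

theorem one_div_sub_one_div_lt_log_stirlingSeq_sdiff {k : ℕ} (hk : k ≠ 0) :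
    1 / (12 * k + 1) - 1 / (12 * ↑(k + 1) + 1) <
      log (stirlingSeq k) - log (stirlingSeq (k + 1)) := by
  obtain ⟨j, rfl⟩ := Nat.exists_eq_succ_of_ne_zero hk
  have h := one_div_sub_one_div_lt_one_div_three_mul_sq (x := j + 1) (by simp)
  push_cast at h ⊢
  exact h.trans_le (one_div_three_mul_sq_le_log_stirlingSeq_sdiff j)

theorem one_div_lt_log_stirlingSeq_sub_log_sqrt_pi {n : ℕ} (hn : n ≠ 0) :
    1 / (12 * n + 1) < log (stirlingSeq n) - log √π := by
  have htail := sub_le_sub_of_tendsto_of_sdiff_le (n := n + 1)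
    (f := fun k ↦ 1 / (12 * (k : ℝ) + 1)) (tendsto_one_div_mul_add_atTop (by norm_num) 1)
    tendsto_log_stirlingSeq fun k hk ↦ (one_div_sub_one_div_lt_log_stirlingSeq_sdiff (by omega)).le
  have hstep := one_div_sub_one_div_lt_log_stirlingSeq_sdiff hn
  simp only [sub_zero] at htail
  linarith

theorem log_stirlingSeq_sub_log_sqrt_pi_le {n : ℕ} (hn : n ≠ 0) :
    log (stirlingSeq n) - log √π ≤ 1 / (12 * n) := by
  have h := sub_le_sub_of_tendsto_of_sdiff_le (n := n) (g := fun k ↦ 1 / (12 * (k : ℝ)))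
    tendsto_log_stirlingSeq (by simpa using tendsto_one_div_mul_add_atTop (a := 12) (by norm_num) 0)
    fun k hk ↦ by
      have hk0 : (k : ℝ) ≠ 0 := by exact_mod_cast (Nat.pos_of_ne_zero hn).trans_le hk |>.ne'
      calc _ ≤ 1 / (12 * (k : ℝ) * (k + 1)) := log_stirlingSeq_sdiff_le k
        _ = 1 / (12 * k) - 1 / (12 * ↑(k + 1)) := by push_cast; field_simp; ring
  simpa using h

theorem exp_lt_stirlingSeq_div_sqrt_pi {n : ℕ} (hn : n ≠ 0) :
    exp (1 / (12 * n + 1)) < stirlingSeq n / √π := by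
  rw [← lt_log_iff_exp_lt (by positivity [stirlingSeq_pos hn]),
    log_div (stirlingSeq_pos hn).ne' (by positivity)]
  exact one_div_lt_log_stirlingSeq_sub_log_sqrt_pi hn

theorem stirlingSeq_div_sqrt_pi_le_exp {n : ℕ} (hn : n ≠ 0) :
    stirlingSeq n / √π ≤ exp (1 / (12 * n)) := by
  rw [← log_le_iff_le_exp (by positivity [stirlingSeq_pos hn]),
    log_div (stirlingSeq_pos hn).ne' (by positivity)]
  exact log_stirlingSeq_sub_log_sqrt_pi_le hn

theorem choose_two_mul_div_two_pow_eq {m : ℕ} (hm : m ≠ 0) :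
    (Nat.choose (2 * m) m : ℝ) / 2 ^ (2 * m + 1) =
      stirlingSeq (2 * m) / √π / (stirlingSeq m / √π) ^ 2 / √(2 * π * (2 * m)) := by
  have hm' : (0 : ℝ) < m := by positivity
  have h2m : √(2 * ↑(2 * m) : ℝ) = 2 * √m := by
    rw [show (2 : ℝ) * ↑(2 * m) = 2 ^ 2 * m by push_cast; ring, sqrt_mul (by positivity),
      sqrt_sq zero_le_two]
  have hπ : √(2 * π * (2 * m)) = 2 * √π * √m := by
    rw [show 2 * π * (2 * m) = 2 ^ 2 * π * m by ring, sqrt_mul (by positivity),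
      sqrt_mul (by positivity), sqrt_sq zero_le_two]
  rw [Nat.cast_choose ℝ (by omega : m ≤ 2 * m), show 2 * m - m = m by omega, stirlingSeq,
    stirlingSeq, h2m, hπ]
  field_simp
  rw [sq_sqrt hm'.le, sq_sqrt (by positivity), ← pow_mul]
  push_cast
  ring

theorem exp_sub_two_mul (a b : ℝ) : exp (a - 2 * b) = exp a / exp b ^ 2 := by
  rw [exp_sub, ← exp_nat_mul]
  norm_num

/-- Stirling-type bounds on `p(n) - 1/2 = C(2m, m)/2^{2m+1}` for odd `n = 2m + 1`. -/
theorem stmt8 (m : ℕ) (hm : 1 ≤ m) (n : ℝ) (hn : n = 2 * (m : ℝ) + 1) :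
    Real.exp (1 / (12 * n - 11) - 2 / (6 * n - 6)) / Real.sqrt (2 * π * (n - 1))
        < (Nat.choose (2 * m) m : ℝ) / 2 ^ (2 * m + 1) ∧
      (Nat.choose (2 * m) m : ℝ) / 2 ^ (2 * m + 1)
        < Real.exp (1 / (12 * n - 12) - 2 / (6 * n - 5)) / Real.sqrt (2 * π * (n - 1)) := by
  have hm0 : m ≠ 0 := by omega
  have h2m0 : 2 * m ≠ 0 := by omega
  have hx_lo := exp_lt_stirlingSeq_div_sqrt_pi h2m0
  have hx_hi := stirlingSeq_div_sqrt_pi_le_exp h2m0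
  have hy_lo := exp_lt_stirlingSeq_div_sqrt_pi hm0
  have hy_hi := stirlingSeq_div_sqrt_pi_le_exp hm0
  have hy_pos : 0 < stirlingSeq m / √π := (exp_pos _).trans hy_lo
  push_cast at hx_lo hx_hi
  subst hn
  rw [choose_two_mul_div_two_pow_eq hm0, show 2 * (m : ℝ) + 1 - 1 = 2 * m by ring]
  have hpos : 0 < √(2 * π * (2 * m)) := by positivity
  refine ⟨div_lt_div_of_pos_right ?_ hpos, div_lt_div_of_pos_right ?_ hpos⟩
  · calc exp (1 / (12 * (2 * m + 1) - 11) - 2 / (6 * (2 * m + 1) - 6))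
        = exp (1 / (12 * (2 * m) + 1)) / exp (1 / (12 * m)) ^ 2 := by
          rw [← exp_sub_two_mul]; ring_nf
      _ < _ := div_lt_div₀ hx_lo (by gcongr)
          ((exp_pos _).trans hx_lo).le (by positivity)
  · calc stirlingSeq (2 * m) / √π / (stirlingSeq m / √π) ^ 2
        < exp (1 / (12 * (2 * m))) / exp (1 / (12 * m + 1)) ^ 2 :=
          div_lt_div₀' hx_hi (by gcongr) (by positivity) (by positivity)
      _ = exp (1 / (12 * (2 * m + 1) - 12) - 2 / (6 * (2 * m + 1) - 5)) := by
          rw [← exp_sub_two_mul]; ring_nf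
end

section
/- For any n ≥ 1, any unit vectors v : Fin n → ℝ³ and any encoding vectors r : {0,1}^n → ℝ³ with ‖r x‖ ≤ 1 for all x, the average success probability (1/(2^n · n)) · Σ_{x ∈ {0,1}^n} Σ_{i < n} (1 + (−1)^{x i} · ⟨v i, r x⟩)/2 is at most 1/2 + 1/(2√n). (This is the upper bound for any n↦1 quantum random access code with shared randomness.) -/
open scoped RealInnerProductSpace

/-!
Writing `s x = ∑ i, (-1)^(x i) • v i`, the success count for the encoding `x` is
`(n + ⟪s x, r x⟫) / 2 ≤ (n + ‖s x‖) / 2`. Since the sign characters `x ↦ (-1)^(x i)` are orthogonal,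
`∑ x, ‖s x‖² = 2^n · n`, and Cauchy–Schwarz gives `∑ x, ‖s x‖ ≤ 2^n · √n`.
-/

open Finset

def boolSign (b : Bool) : ℝ := if b then -1 else 1

@[simp] lemma boolSign_not (b : Bool) : boolSign (!b) = -boolSign b := by
  cases b <;> simp [boolSign]

@[simp] lemma boolSign_mul_self (b : Bool) : boolSign b * boolSign b = 1 := by
  cases b <;> simp [boolSign]

section SignedSum

variable {ι : Type*} [Fintype ι] {E : Type*} [NormedAddCommGroup E] [InnerProductSpace ℝ E]

def signedSum (v : ι → E) (x : ι → Bool) : E := ∑ i, boolSign (x i) • v i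

lemma inner_signedSum_left (v : ι → E) (x : ι → Bool) (w : E) :
    ⟪signedSum v x, w⟫ = ∑ i, boolSign (x i) * ⟪v i, w⟫ := by
  simp only [signedSum, sum_inner, real_inner_smul_left]

lemma sum_success_le (v : ι → E) (x : ι → Bool) {w : E} (hw : ‖w‖ ≤ 1) :
    ∑ i, (1 + boolSign (x i) * ⟪v i, w⟫) / 2 ≤ (Fintype.card ι + ‖signedSum v x‖) / 2 := by
  have hinner : ⟪signedSum v x, w⟫ ≤ ‖signedSum v x‖ :=
    (real_inner_le_norm _ _).trans (mul_le_of_le_one_right (norm_nonneg _) hw)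
  calc ∑ i, (1 + boolSign (x i) * ⟪v i, w⟫) / 2 = (Fintype.card ι + ⟪signedSum v x, w⟫) / 2 := by
        rw [← sum_div, sum_add_distrib, inner_signedSum_left, sum_const, card_univ, nsmul_one]
    _ ≤ (Fintype.card ι + ‖signedSum v x‖) / 2 := by gcongr

variable [DecidableEq ι]

lemma sum_boolSign_mul_boolSign (i j : ι) :
    ∑ x : ι → Bool, boolSign (x i) * boolSign (x j) = if i = j then 2 ^ Fintype.card ι else 0 := by
  split_ifs with hij
  · simp [hij]
  -- flipping the `i`-th bit negates every term
  have flip : Function.Involutive fun x : ι → Bool => Function.update x i (!x i) := by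
    intro x; ext k; by_cases hk : k = i <;> simp [hk]
  have h := Fintype.sum_equiv flip.toPerm (fun x => boolSign (x i) * boolSign (x j))
    (fun x => -(boolSign (x i) * boolSign (x j)))
    fun x => by simp [Function.update_of_ne (Ne.symm hij)]
  rw [sum_neg_distrib] at h
  linarith

lemma sum_norm_signedSum_sq (v : ι → E) :
    ∑ x : ι → Bool, ‖signedSum v x‖ ^ 2 = 2 ^ Fintype.card ι * ∑ i, ‖v i‖ ^ 2 := by
  calc ∑ x : ι → Bool, ‖signedSum v x‖ ^ 2
      = ∑ i, ∑ j, (∑ x : ι → Bool, boolSign (x i) * boolSign (x j)) * ⟪v i, v j⟫ := by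
        simp_rw [← real_inner_self_eq_norm_sq, inner_signedSum_left, signedSum, inner_sum,
          real_inner_smul_right, mul_sum, sum_mul]
        rw [sum_comm]
        refine sum_congr rfl fun i _ => ?_
        rw [sum_comm]
        refine sum_congr rfl fun j _ => sum_congr rfl fun x _ => by ring
    _ = 2 ^ Fintype.card ι * ∑ i, ‖v i‖ ^ 2 := by
        simp [sum_boolSign_mul_boolSign, mul_sum]

lemma sum_norm_signedSum_le (v : ι → E) :
    ∑ x : ι → Bool, ‖signedSum v x‖ ≤ 2 ^ Fintype.card ι * √(∑ i, ‖v i‖ ^ 2) := by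
  have hcs := sq_sum_le_card_mul_sum_sq (s := univ) (f := fun x : ι → Bool => ‖signedSum v x‖)
  rw [sum_norm_signedSum_sq, card_univ, Fintype.card_fun, Fintype.card_bool] at hcs
  refine abs_le_of_sq_le_sq' ?_ (by positivity) |>.2
  rw [mul_pow, Real.sq_sqrt (by positivity)]
  push_cast at hcs
  linarith

lemma sum_sum_success_le {v : ι → E} (hv : ∀ i, ‖v i‖ = 1) {r : (ι → Bool) → E}
    (hr : ∀ x, ‖r x‖ ≤ 1) :
    ∑ x : ι → Bool, ∑ i, (1 + boolSign (x i) * ⟪v i, r x⟫) / 2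
      ≤ 2 ^ Fintype.card ι * (Fintype.card ι + √(Fintype.card ι)) / 2 := by
  have hnorm := sum_norm_signedSum_le v
  simp only [hv, one_pow, sum_const, card_univ, nsmul_one] at hnorm
  calc ∑ x : ι → Bool, ∑ i, (1 + boolSign (x i) * ⟪v i, r x⟫) / 2
      ≤ ∑ x : ι → Bool, (Fintype.card ι + ‖signedSum v x‖) / 2 :=
        sum_le_sum fun x _ => sum_success_le v x (hr x)
    _ = (2 ^ Fintype.card ι * Fintype.card ι + ∑ x : ι → Bool, ‖signedSum v x‖) / 2 := by
        rw [← sum_div, sum_add_distrib, sum_const, card_univ, Fintype.card_fun, Fintype.card_bool,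
          nsmul_eq_mul]
        push_cast
        ring
    _ ≤ 2 ^ Fintype.card ι * (Fintype.card ι + √(Fintype.card ι)) / 2 := by
        rw [mul_add]
        gcongr

end SignedSum

/-- Upper bound for any `n ↦ 1` quantum random access code with shared randomness, in the
Bloch-vector formulation: for unit measurement vectors `v i` and encoding Bloch vectors
`r x` of norm at most `1`, the average success probability is at most `1/2 + 1/(2√n)`. -/
theorem stmt12 (n : ℕ) (hn : 1 ≤ n) (v : Fin n → EuclideanSpace ℝ (Fin 3))
    (hv : ∀ i, ‖v i‖ = 1) (r : (Fin n → Bool) → EuclideanSpace ℝ (Fin 3))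
    (hr : ∀ x, ‖r x‖ ≤ 1) :
    (1 / ((2 : ℝ) ^ n * n)) *
        ∑ x : Fin n → Bool, ∑ i : Fin n,
          (1 + (if x i then (-1 : ℝ) else 1) * ⟪v i, r x⟫) / 2
      ≤ 1 / 2 + 1 / (2 * Real.sqrt n) := by
  have hbound := sum_sum_success_le hv hr
  rw [Fintype.card_fin] at hbound
  have hsqrt : √(n : ℝ) * √(n : ℝ) = n := Real.mul_self_sqrt n.cast_nonneg
  have hn_pos : (0 : ℝ) < n := by exact_mod_cast hn
  calc (1 / ((2 : ℝ) ^ n * n)) * ∑ x : Fin n → Bool, ∑ i : Fin n,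
          (1 + (if x i then (-1 : ℝ) else 1) * ⟪v i, r x⟫) / 2
      ≤ 1 / ((2 : ℝ) ^ n * n) * (2 ^ n * (n + √n) / 2) := by gcongr; exact hbound
    _ = 1 / 2 + 1 / (2 * Real.sqrt n) := by
        field_simp
        linear_combination hsqrt
end

section
/- Every two-outcome qubit POVM can be simulated by a probabilistic combination of enhanced orthogonal measurements: for all real numbers a, b with 0 ≤ a ≤ 1 and 0 ≤ b ≤ 1, there exist nonnegative real numbers c₀, c₁, c₀₁, c₁₀ with c₀ + c₁ + c₀₁ + c₁₀ = 1 such that for all nonnegative real numbers p₀, p₁ with p₀ + p₁ = 1: c₀ + c₀₁·p₀ + c₁₀·p₁ = a·p₀ + b·p₁ and c₁ + c₀₁·p₁ + c₁₀·p₀ = (1−a)·p₀ + (1−b)·p₁. (Explicitly, one may take c₀ = min{a,b}, c₁ = 1 − (a+b) + min{a,b}, c₀₁ = a − min{a,b}, c₁₀ = b − min{a,b}.) -/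
/-! The common part `min a b` of the two diagonal entries is output as `0` without measuring and
`1 - max a b` as `1`; the excesses `a - min a b` and `b - min a b`, at most one of which is
nonzero, are realised by measuring in the basis or in the opposite basis. -/

theorem mixture_outcome_one_of_outcome_zero {c₀ c₁ c₀₁ c₁₀ a b p₀ p₁ : ℝ}
    (hc : c₀ + c₁ + c₀₁ + c₁₀ = 1) (hp : p₀ + p₁ = 1)
    (h : c₀ + c₀₁ * p₀ + c₁₀ * p₁ = a * p₀ + b * p₁) :
    c₁ + c₀₁ * p₁ + c₁₀ * p₀ = (1 - a) * p₀ + (1 - b) * p₁ := by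
  linear_combination hc + (c₀₁ + c₁₀ - 1) * hp - h

/-- Every two-outcome qubit POVM, given by the diagonal entries `a, b ∈ [0,1]` of its
first element in an eigenbasis, can be simulated by a probabilistic combination of
enhanced orthogonal measurements: outputting `0` with probability `c₀`, outputting `1`
with probability `c₁`, measuring in the basis with probability `c₀₁`, and measuring in
the opposite basis with probability `c₁₀`. -/
theorem stmt19 (a b : ℝ) (ha0 : 0 ≤ a) (ha1 : a ≤ 1) (hb0 : 0 ≤ b) (hb1 : b ≤ 1) :
    ∃ c₀ c₁ c₀₁ c₁₀ : ℝ,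
      0 ≤ c₀ ∧ 0 ≤ c₁ ∧ 0 ≤ c₀₁ ∧ 0 ≤ c₁₀ ∧
      c₀ + c₁ + c₀₁ + c₁₀ = 1 ∧
      ∀ p₀ p₁ : ℝ, 0 ≤ p₀ → 0 ≤ p₁ → p₀ + p₁ = 1 →
        c₀ + c₀₁ * p₀ + c₁₀ * p₁ = a * p₀ + b * p₁ ∧
        c₁ + c₀₁ * p₁ + c₁₀ * p₀ = (1 - a) * p₀ + (1 - b) * p₁ := by
  have hsum : min a b + (1 - max a b) + (a - min a b) + (b - min a b) = 1 := by
    linear_combination -min_add_max a b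
  refine ⟨min a b, 1 - max a b, a - min a b, b - min a b, le_min ha0 hb0,
    sub_nonneg.2 (max_le ha1 hb1), sub_nonneg.2 (min_le_left a b),
    sub_nonneg.2 (min_le_right a b), hsum, fun p₀ p₁ _ _ hp => ?_⟩
  have hzero : min a b + (a - min a b) * p₀ + (b - min a b) * p₁ = a * p₀ + b * p₁ := by
    linear_combination -(min a b) * hp
  exact ⟨hzero, mixture_outcome_one_of_outcome_zero hsum hp hzero⟩
end
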